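/- Let A, B, X be n×n complex matrices with A and B positive definite, let λ₁,…,λₙ be the eigenvalues of A and ν₁,…,νₙ the eigenvalues of B, and set K̲ = min{ K((λᵢ/νⱼ)^{1/2}, 2) : i, j = 1,…,n }. If 1/2 < v < 1, then ‖(1 − v)AX + vXB‖_F² − v²‖AX − XB‖_F² ≤ K̲^{−r̂₁} ‖A^{1−v} X B^{v}‖_F² − r₁‖A^{1/2} X B^{1/2} − AX‖_F², where r = min{v, 1 − v}, r₁ = min{2r, 1 − 2r} and r̂₁ = min{2r₁, 1 − 2r₁}. -/

import Mathlib

/-!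
Diagonalize `A = U diag(λ) U*`, `B = V diag(ν) V*` and put `Y = U* X V`. Every matrix in the
inequality is `U (c ∘ Y) V*` for a real Schur weight `c i j` depending only on `λ i`, `ν j`, and
the Frobenius norm is unitarily invariant, so both sides are sums `∑ c i j ² |Y i j|²`; since
`K̲ ≤ K(√(λ i / ν j))`, it suffices to prove the inequality for `1 × 1` matrices `a = λ i`,
`b = ν j`.
Writing `b = a t²` and dividing by `a²`, that scalar inequality becomes
`2 - t^(-k) (m/t + 1 - m) ≤ K(t)^(-min(m, 1-m)) t^(k+m)` (times `t²`), with `(m, k) = (4v-2, 0)` if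
`v ≤ 3/4` and `(4v-3, 1)` otherwise. With `u = 1/t` and `q = u^k (m u + 1 - m)`, the
Kantorovich-refined Young inequality `K(u)^min(m, 1-m) u^m ≤ m u + 1 - m` gives
`K(t)^min(m, 1-m) u^(k+m) ≤ q`, and `2 - q ≤ 1/q` finishes.
-/

open Matrix
open scoped ComplexOrder

/-- Real power of a matrix, defined for Hermitian matrices via the spectral
decomposition (functional calculus); junk value otherwise. -/
noncomputable def mrpow {n : ℕ} (A : Matrix (Fin n) (Fin n) ℂ) (t : ℝ) :
    Matrix (Fin n) (Fin n) ℂ :=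
  if h : A.IsHermitian then
    (h.eigenvectorUnitary : Matrix (Fin n) (Fin n) ℂ)
      * Matrix.diagonal (fun i => ((h.eigenvalues i ^ t : ℝ) : ℂ))
      * star (h.eigenvectorUnitary : Matrix (Fin n) (Fin n) ℂ)
  else A

/-- The squared Hilbert-Schmidt (Frobenius) norm `‖A‖_F^2`. -/
noncomputable def frobSq {n : ℕ} (A : Matrix (Fin n) (Fin n) ℂ) : ℝ :=
  ∑ i : Fin n, ∑ j : Fin n, ‖A i j‖ ^ 2

/-- The Kantorovich constant `K(t, 2) = (t + 1)^2 / (4 t)`. -/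
noncomputable def Kant (t : ℝ) : ℝ := (t + 1) ^ 2 / (4 * t)

theorem Kant_pos {t : ℝ} (ht : 0 < t) : 0 < Kant t := by
  unfold Kant; positivity

theorem one_le_Kant {t : ℝ} (ht : 0 < t) : 1 ≤ Kant t := by
  rw [Kant, le_div_iff₀ (by positivity)]
  nlinarith [sq_nonneg (t - 1)]

theorem Kant_inv {t : ℝ} (ht : 0 < t) : Kant t⁻¹ = Kant t := by
  unfold Kant
  field_simp
  ring

theorem Kant_mul_self {t : ℝ} (ht : 0 < t) : Kant t * t = ((1 + t) / 2) ^ 2 := by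
  unfold Kant
  field_simp
  ring

/-- Young's inequality refined by the Kantorovich constant (Zuo–Shi–Fujii). -/
theorem Kant_rpow_min_mul_rpow_le {m u : ℝ} (hm0 : 0 ≤ m) (hm1 : m ≤ 1) (hu : 0 < u) :
    Kant u ^ min m (1 - m) * u ^ m ≤ m * u + (1 - m) := by
  set r := min m (1 - m)
  have hr0 : 0 ≤ r := le_min hm0 (by linarith)
  have hrm : r ≤ m := min_le_left _ _
  have hrm' : r ≤ 1 - m := min_le_right _ _
  have hmean : 0 < (1 + u) / 2 := by positivity
  -- as `K(u) u = ((1 + u) / 2)²`, the left side is a geometric mean of `(1 + u) / 2`, `u`, `1`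
  -- with weights `2r`, `m - r`, `1 - m - r`
  have hsplit : Kant u ^ r * u ^ m = ((1 + u) / 2) ^ (2 * r) * u ^ (m - r) := by
    rw [show u ^ m = u ^ r * u ^ (m - r) by rw [← Real.rpow_add hu, add_sub_cancel],
      ← mul_assoc, ← Real.mul_rpow (Kant_pos hu).le hu.le, Kant_mul_self hu,
      ← Real.rpow_natCast, ← Real.rpow_mul hmean.le, Nat.cast_ofNat, mul_comm]
  have hamgm := Real.geom_mean_le_arith_mean3_weighted (by linarith : (0 : ℝ) ≤ 2 * r)
    (by linarith : 0 ≤ m - r) (by linarith : 0 ≤ 1 - m - r) hmean.le hu.le zero_le_one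
    (by ring)
  rw [Real.one_rpow, mul_one] at hamgm
  linarith

theorem two_sub_le_Kant_rpow_mul_rpow {m k t : ℝ} (hm0 : 0 ≤ m) (hm1 : m ≤ 1) (ht : 0 < t) :
    2 - t ^ (-k) * (m * t⁻¹ + (1 - m)) ≤ Kant t ^ (-min m (1 - m)) * t ^ (k + m) := by
  set q := t ^ (-k) * (m * t⁻¹ + (1 - m))
  have hq : 0 < q := by
    have : 0 < m * t⁻¹ + (1 - m) := by
      rcases hm0.eq_or_lt with rfl | hm
      · norm_num
      · nlinarith [inv_pos.mpr ht]
    positivity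
  set Y := Kant t ^ min m (1 - m) * t ^ (-(k + m))
  have hY : 0 < Y := by have := Kant_pos ht; positivity
  have hYq : Y ≤ q := by
    have h := Kant_rpow_min_mul_rpow_le hm0 hm1 (inv_pos.mpr ht)
    rw [Kant_inv ht, Real.inv_rpow ht.le, ← Real.rpow_neg ht.le] at h
    calc Y = t ^ (-k) * (Kant t ^ min m (1 - m) * t ^ (-m)) := by
          simp only [Y, neg_add, Real.rpow_add ht]; ring
      _ ≤ q := mul_le_mul_of_nonneg_left h (by positivity)
  have hq2 : 2 - q ≤ q⁻¹ := by
    rw [← one_div, le_div_iff₀ hq]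
    nlinarith [sq_nonneg (q - 1)]
  calc 2 - q ≤ q⁻¹ := hq2
    _ ≤ Y⁻¹ := inv_anti₀ hY hYq
    _ = Kant t ^ (-min m (1 - m)) * t ^ (k + m) := by
      simp only [Y, mul_inv, ← Real.rpow_neg (Kant_pos ht).le, ← Real.rpow_neg ht.le, neg_neg]

theorem normalized_scalar_ineq {v r1 rh1 t : ℝ} (hv0 : 1 / 2 < v) (hv : v < 1)
    (hr1 : r1 = min (2 * (1 - v)) (1 - 2 * (1 - v))) (hrh1 : rh1 = min (2 * r1) (1 - 2 * r1))
    (ht : 0 < t) :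
    2 * v * t ^ 2 - (2 * v - 1) + r1 * (t - 1) ^ 2 ≤ Kant t ^ (-rh1) * t ^ (4 * v) := by
  have reduce : ∀ m k, 0 ≤ m → m ≤ 1 → k + m = 4 * v - 2 → rh1 = min m (1 - m) →
      t ^ 2 * (2 - t ^ (-k) * (m * t⁻¹ + (1 - m))) ≤ Kant t ^ (-rh1) * t ^ (4 * v) := by
    intro m k hm0 hm1 hkm hrh1m
    calc t ^ 2 * (2 - t ^ (-k) * (m * t⁻¹ + (1 - m)))
        ≤ t ^ 2 * (Kant t ^ (-rh1) * t ^ (k + m)) := by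
          rw [hrh1m]
          exact mul_le_mul_of_nonneg_left (two_sub_le_Kant_rpow_mul_rpow hm0 hm1 ht)
            (sq_nonneg t)
      _ = Kant t ^ (-rh1) * t ^ (4 * v) := by
          rw [hkm, Real.rpow_sub ht, Real.rpow_two]
          field_simp
  rcases le_or_gt v (3 / 4) with hv34 | hv34
  · have hr1' : r1 = 2 * v - 1 := by rw [hr1, min_eq_right (by linarith)]; ring
    calc 2 * v * t ^ 2 - (2 * v - 1) + r1 * (t - 1) ^ 2
        = t ^ 2 * (2 - t ^ (-0 : ℝ) * ((4 * v - 2) * t⁻¹ + (1 - (4 * v - 2)))) := by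
          rw [hr1', neg_zero, Real.rpow_zero]; field_simp; ring
      _ ≤ _ := reduce _ _ (by linarith) (by linarith) (by ring)
          (by rw [hrh1, hr1']; ring_nf)
  · have hr1' : r1 = 2 - 2 * v := by rw [hr1, min_eq_left (by linarith)]; ring
    calc 2 * v * t ^ 2 - (2 * v - 1) + r1 * (t - 1) ^ 2
        = t ^ 2 * (2 - t ^ (-1 : ℝ) * ((4 * v - 3) * t⁻¹ + (1 - (4 * v - 3)))) := by
          rw [hr1', Real.rpow_neg_one]; field_simp; ring
      _ ≤ _ := reduce _ _ (by linarith) (by linarith) (by ring)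
          (by rw [hrh1, hr1', min_comm]; ring_nf)

theorem scalar_ineq {v r1 rh1 a b : ℝ} (hv0 : 1 / 2 < v) (hv : v < 1)
    (hr1 : r1 = min (2 * (1 - v)) (1 - 2 * (1 - v))) (hrh1 : rh1 = min (2 * r1) (1 - 2 * r1))
    (ha : 0 < a) (hb : 0 < b) :
    ((1 - v) * a + v * b) ^ 2 - v ^ 2 * (a - b) ^ 2
      ≤ Kant √(a / b) ^ (-rh1) * (a ^ (1 - v) * b ^ v) ^ 2
        - r1 * (a ^ (1 / 2 : ℝ) * b ^ (1 / 2 : ℝ) - a) ^ 2 := by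
  set t := √(b / a)
  have ht : 0 < t := Real.sqrt_pos.mpr (div_pos hb ha)
  have hb_eq : b = a * t ^ 2 := by
    rw [Real.sq_sqrt (div_pos hb ha).le]; field_simp
  have hK : √(a / b) = t⁻¹ := by rw [← Real.sqrt_inv, inv_div]
  have hpow : a ^ (1 - v) * b ^ v = a * t ^ (2 * v) := by
    rw [hb_eq, Real.mul_rpow ha.le (by positivity), ← mul_assoc, ← Real.rpow_add ha,
      sub_add_cancel, Real.rpow_one, ← Real.rpow_natCast, ← Real.rpow_mul ht.le, Nat.cast_ofNat]
  have hsqrt : a ^ (1 / 2 : ℝ) * b ^ (1 / 2 : ℝ) = a * t := by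
    rw [← Real.sqrt_eq_rpow, ← Real.sqrt_eq_rpow, ← Real.sqrt_mul ha.le, hb_eq,
      show a * (a * t ^ 2) = (a * t) ^ 2 by ring, Real.sqrt_sq (by positivity)]
  have hsq : (t ^ (2 * v)) ^ 2 = t ^ (4 * v) := by
    rw [← Real.rpow_natCast, ← Real.rpow_mul ht.le]; ring_nf
  have h := mul_le_mul_of_nonneg_left (normalized_scalar_ineq hv0 hv hr1 hrh1 ht) (sq_nonneg a)
  rw [hK, Kant_inv ht, hpow, hsqrt, mul_pow, hsq, hb_eq]
  linarith

section Spectral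

variable {n : ℕ}

theorem frobSq_eq_re_trace (M : Matrix (Fin n) (Fin n) ℂ) : frobSq M = (Mᴴ * M).trace.re := by
  rw [frobSq, Finset.sum_comm, trace, Complex.re_sum]
  refine Finset.sum_congr rfl fun j _ => ?_
  rw [diag_apply, mul_apply, Complex.re_sum]
  refine Finset.sum_congr rfl fun i _ => ?_
  rw [conjTranspose_apply, Complex.sq_norm, Complex.star_def, mul_comm, Complex.mul_conj,
    Complex.ofReal_re]

theorem frobSq_unitary_mul_mul_star {U V : Matrix (Fin n) (Fin n) ℂ}
    (hU : U ∈ unitaryGroup (Fin n) ℂ) (hV : V ∈ unitaryGroup (Fin n) ℂ)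
    (M : Matrix (Fin n) (Fin n) ℂ) : frobSq (U * M * star V) = frobSq M := by
  have hU' : Uᴴ * U = 1 := mem_unitaryGroup_iff'.mp hU
  have hV' : Vᴴ * V = 1 := mem_unitaryGroup_iff'.mp hV
  rw [star_eq_conjTranspose, frobSq_eq_re_trace, frobSq_eq_re_trace, conjTranspose_mul,
    conjTranspose_mul, conjTranspose_conjTranspose,
    show V * (Mᴴ * Uᴴ) * (U * M * Vᴴ) = V * (Mᴴ * (Uᴴ * U) * M) * Vᴴ by
      simp only [Matrix.mul_assoc],
    hU', Matrix.mul_one, trace_mul_cycle, ← Matrix.mul_assoc, hV', Matrix.one_mul]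

variable {A B : Matrix (Fin n) (Fin n) ℂ}

theorem mrpow_eq (hA : A.IsHermitian) (s : ℝ) :
    mrpow A s = (hA.eigenvectorUnitary : Matrix (Fin n) (Fin n) ℂ)
      * diagonal (fun i => ((hA.eigenvalues i ^ s : ℝ) : ℂ))
      * star (hA.eigenvectorUnitary : Matrix (Fin n) (Fin n) ℂ) :=
  dif_pos hA

theorem mrpow_zero (hA : A.IsHermitian) : mrpow A 0 = 1 := by
  simp [mrpow_eq hA]

theorem mrpow_one (hA : A.IsHermitian) : mrpow A 1 = A := by
  conv_rhs => rw [hA.spectral_theorem]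
  simp [mrpow_eq hA, Function.comp_def]

/-- `c ↦ U (c ∘ Y) V*`, where `U`, `V` are the eigenvector unitaries of `A`, `B`, `Y = U* X V`
and `∘` is the Schur (entrywise) product. -/
noncomputable def eigenSchurMul (hA : A.IsHermitian) (hB : B.IsHermitian)
    (X : Matrix (Fin n) (Fin n) ℂ) : (Fin n → Fin n → ℝ) →ₗ[ℝ] Matrix (Fin n) (Fin n) ℂ where
  toFun c := (hA.eigenvectorUnitary : Matrix (Fin n) (Fin n) ℂ)
    * of (fun i j => (c i j : ℂ) * (star (hA.eigenvectorUnitary : Matrix (Fin n) (Fin n) ℂ)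
        * X * hB.eigenvectorUnitary) i j)
    * star (hB.eigenvectorUnitary : Matrix (Fin n) (Fin n) ℂ)
  map_add' c d := by
    rw [← Matrix.add_mul, ← Matrix.mul_add]
    congr
    ext i j
    simp [add_mul]
  map_smul' a c := by
    rw [RingHom.id_apply, ← Matrix.smul_mul, ← Matrix.mul_smul]
    congr
    ext i j
    simp [Complex.real_smul, mul_assoc]

variable (hA : A.IsHermitian) (hB : B.IsHermitian) (X : Matrix (Fin n) (Fin n) ℂ)

theorem mrpow_mul_mul_mrpow (s t : ℝ) :
    mrpow A s * X * mrpow B t =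
      eigenSchurMul hA hB X (fun i j => hA.eigenvalues i ^ s * hB.eigenvalues j ^ t) := by
  rw [mrpow_eq hA, mrpow_eq hB, eigenSchurMul, LinearMap.coe_mk, AddHom.coe_mk]
  have hdiag : of (fun i j => ((hA.eigenvalues i ^ s * hB.eigenvalues j ^ t : ℝ) : ℂ) *
      (star (hA.eigenvectorUnitary : Matrix (Fin n) (Fin n) ℂ) * X
        * hB.eigenvectorUnitary) i j) =
      diagonal (fun i => ((hA.eigenvalues i ^ s : ℝ) : ℂ)) *
        (star (hA.eigenvectorUnitary : Matrix (Fin n) (Fin n) ℂ) * X * hB.eigenvectorUnitary) *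
        diagonal (fun j => ((hB.eigenvalues j ^ t : ℝ) : ℂ)) := by
    ext i j
    simp only [of_apply, diagonal_mul, mul_diagonal, Complex.ofReal_mul]
    ring
  rw [hdiag]
  simp only [Matrix.mul_assoc]

theorem mul_eq_eigenSchurMul_left :
    A * X = eigenSchurMul hA hB X (fun i _ => hA.eigenvalues i) := by
  have h := mrpow_mul_mul_mrpow hA hB X 1 0
  simp only [mrpow_one hA, mrpow_zero hB, Real.rpow_one, Real.rpow_zero, mul_one] at h
  exact h

theorem mul_eq_eigenSchurMul_right :
    X * B = eigenSchurMul hA hB X (fun _ j => hB.eigenvalues j) := by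
  have h := mrpow_mul_mul_mrpow hA hB X 0 1
  simp only [mrpow_zero hA, mrpow_one hB, Real.rpow_one, Real.rpow_zero, one_mul] at h
  exact h

theorem frobSq_eigenSchurMul (c : Fin n → Fin n → ℝ) :
    frobSq (eigenSchurMul hA hB X c) = ∑ i, ∑ j, c i j ^ 2 *
      ‖(star (hA.eigenvectorUnitary : Matrix (Fin n) (Fin n) ℂ) * X
        * hB.eigenvectorUnitary) i j‖ ^ 2 := by
  rw [eigenSchurMul, LinearMap.coe_mk, AddHom.coe_mk,
    frobSq_unitary_mul_mul_star hA.eigenvectorUnitary.2 hB.eigenvectorUnitary.2]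
  simp [frobSq, mul_pow]

end Spectral

theorem rpow_neg_le_sInf_range_rpow_neg {ι : Type*} {f : ι → ℝ} (hf : ∀ i, 1 ≤ f i) {s : ℝ}
    (hs : 0 ≤ s) (i : ι) : f i ^ (-s) ≤ sInf (Set.range f) ^ (-s) := by
  have hbdd : BddBelow (Set.range f) := ⟨1, Set.forall_mem_range.mpr hf⟩
  have hone : 1 ≤ sInf (Set.range f) :=
    le_csInf (Set.range_nonempty_iff_nonempty.mpr ⟨i⟩) (Set.forall_mem_range.mpr hf)
  exact Real.rpow_le_rpow_of_nonpos (by linarith) (csInf_le hbdd ⟨i, rfl⟩) (neg_nonpos.mpr hs)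

theorem stmt_19_general {n : ℕ} (A B X : Matrix (Fin n) (Fin n) ℂ) (v Kmin r r1 rh1 : ℝ)
    (hA : A.PosDef) (hB : B.PosDef)
    (hK : Kmin = sInf (Set.range fun p : Fin n × Fin n =>
      Kant (Real.sqrt (hA.1.eigenvalues p.1 / hB.1.eigenvalues p.2))))
    (hr : r = min v (1 - v)) (hr1 : r1 = min (2 * r) (1 - 2 * r))
    (hrh1 : rh1 = min (2 * r1) (1 - 2 * r1))
    (hv0 : 1 / 2 < v) (hv : v < 1) :
    frobSq (((1 - v : ℝ) : ℂ) • (A * X) + ((v : ℝ) : ℂ) • (X * B))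
        - v ^ 2 * frobSq (A * X - X * B) ≤
      Kmin ^ (-rh1) * frobSq (mrpow A (1 - v) * X * mrpow B v)
        - r1 * frobSq (mrpow A (1 / 2) * X * mrpow B (1 / 2) - A * X) := by
  have hr1' : r1 = min (2 * (1 - v)) (1 - 2 * (1 - v)) := by
    rw [hr1, hr, min_eq_right (show 1 - v ≤ v by linarith)]
  have hrh1_nonneg : 0 ≤ rh1 := by
    rw [hrh1, hr1']
    rcases min_cases (2 * (1 - v)) (1 - 2 * (1 - v)) with ⟨h, h'⟩ | ⟨h, h'⟩ <;>
      exact le_min (by linarith) (by linarith)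
  rw [mul_eq_eigenSchurMul_left hA.1 hB.1 X, mul_eq_eigenSchurMul_right hA.1 hB.1 X,
    Complex.coe_smul, Complex.coe_smul, ← map_smul, ← map_smul, ← map_add, ← map_sub,
    mrpow_mul_mul_mrpow hA.1 hB.1, mrpow_mul_mul_mrpow hA.1 hB.1, ← map_sub]
  simp only [frobSq_eigenSchurMul, Finset.mul_sum, ← Finset.sum_sub_distrib, Pi.add_apply,
    Pi.sub_apply, Pi.smul_apply, smul_eq_mul]
  refine Finset.sum_le_sum fun i _ => Finset.sum_le_sum fun j _ => ?_
  have hKmin := rpow_neg_le_sInf_range_rpow_neg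
    (fun p => one_le_Kant (Real.sqrt_pos.mpr (div_pos (hA.eigenvalues_pos p.1)
      (hB.eigenvalues_pos p.2)))) hrh1_nonneg (i, j)
  rw [← hK] at hKmin
  have hscalar := scalar_ineq hv0 hv hr1' hrh1 (hA.eigenvalues_pos i) (hB.eigenvalues_pos j)
  have hw := sq_nonneg ‖(star (hA.1.eigenvectorUnitary : Matrix (Fin n) (Fin n) ℂ) * X *
    hB.1.eigenvectorUnitary) i j‖
  have hG := sq_nonneg (hA.1.eigenvalues i ^ (1 - v) * hB.1.eigenvalues j ^ v)
  linarith [mul_le_mul_of_nonneg_right hscalar hw,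
    mul_le_mul_of_nonneg_right hKmin (mul_nonneg hG hw)]

theorem stmt_19 {n : ℕ} (A B X : Matrix (Fin n) (Fin n) ℂ) (v Kmin r r1 rh1 : ℝ)
    (hn : 0 < n) (hA : A.PosDef) (hB : B.PosDef)
    (hK : Kmin = sInf (Set.range fun p : Fin n × Fin n =>
      Kant (Real.sqrt (hA.1.eigenvalues p.1 / hB.1.eigenvalues p.2))))
    (hr : r = min v (1 - v)) (hr1 : r1 = min (2 * r) (1 - 2 * r))
    (hrh1 : rh1 = min (2 * r1) (1 - 2 * r1))
    (hv0 : 1 / 2 < v) (hv : v < 1) :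
    frobSq (((1 - v : ℝ) : ℂ) • (A * X) + ((v : ℝ) : ℂ) • (X * B))
        - v ^ 2 * frobSq (A * X - X * B) ≤
      Kmin ^ (-rh1) * frobSq (mrpow A (1 - v) * X * mrpow B v)
        - r1 * frobSq (mrpow A (1 / 2) * X * mrpow B (1 / 2) - A * X) :=
  stmt_19_general A B X v Kmin r r1 rh1 hA hB hK hr hr1 hrh1 hv0 hv
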